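/- arXiv:2209.13253 — 2 statements merged into one kernel-verified Lean document; each statement's English description precedes it below -/
import Mathlib

section
/- Let X be a continuous space. Then L_X-convergence is topological and coincides with convergence in the Lawson topology: a net (x_i) converges to x in the Lawson topology λ(X) if and only if ((x_i), x) ∈ L_X. -/
namespace Conv

variable {X : Type}

/-- A directed preorder (index of a net), given as an explicit relation. -/
def DirIdx {I : Type} (r : I → I → Prop) : Prop :=
  Nonempty I ∧ (∀ i, r i i) ∧ (∀ a b c : I, r a b → r b c → r a c) ∧
    ∀ a b : I, ∃ c, r a c ∧ r b c

/-- Specialization order relative to a family `T` of "open" sets. -/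
def sle (T : Set (Set X)) (x y : X) : Prop := ∀ U ∈ T, x ∈ U → y ∈ U

/-- Upper closure of a set w.r.t. the specialization order of `T`. -/
def upset (T : Set (Set X)) (A : Set X) : Set X := {z | ∃ a ∈ A, sle T a z}

/-- `D` is a (nonempty) directed subset w.r.t. the specialization order of `T`. -/
def IsDirSet (T : Set (Set X)) (D : Set X) : Prop := D.Nonempty ∧ DirectedOn (sle T) D

/-- A subset `D` (viewed as a monotone net) converges to `x` w.r.t. `T`. -/
def DConv (T : Set (Set X)) (D : Set X) (x : X) : Prop :=
  ∀ U ∈ T, x ∈ U → (D ∩ U).Nonempty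

/-- `U` is directed-open w.r.t. `T`. -/
def DirOpen (T : Set (Set X)) (U : Set X) : Prop :=
  ∀ D x, IsDirSet T D → DConv T D x → x ∈ U → (D ∩ U).Nonempty

/-- The family of directed-open sets. -/
def DTop (T : Set (Set X)) : Set (Set X) := {U | DirOpen T U}

/-- The family of open sets of a topological space. -/
def opens (X : Type) [TopologicalSpace X] : Set (Set X) := {U | IsOpen U}

/-- Every directed-open set belongs to `T`. -/
def DirT (T : Set (Set X)) : Prop := ∀ U, DirOpen T U → U ∈ T

/-- A directed space: every directed-open set is open. -/
def IsDirectedSpace (X : Type) [TopologicalSpace X] : Prop := DirT (opens X)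

/-- A net is eventually in `U`. -/
def EvIn {I : Type} (r : I → I → Prop) (xi : I → X) (U : Set X) : Prop :=
  ∃ k, ∀ i, r k i → xi i ∈ U

/-- `y` is an eventual lower bound of the net `xi`. -/
def EvLB (T : Set (Set X)) {I : Type} (r : I → I → Prop) (xi : I → X) (y : X) : Prop :=
  ∃ k, ∀ i, r k i → sle T y (xi i)

/-- Topological convergence of a net w.r.t. the family `T` of open sets. -/
def NConv (T : Set (Set X)) {I : Type} (r : I → I → Prop) (xi : I → X) (x : X) : Prop :=
  ∀ U ∈ T, x ∈ U → EvIn r xi U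

/-- `((x_i), x) ∈ S_X`: some directed set of eventual lower bounds converges to `x`. -/
def SConv (T : Set (Set X)) {I : Type} (r : I → I → Prop) (xi : I → X) (x : X) : Prop :=
  ∃ D : Set X, IsDirSet T D ∧ (∀ d ∈ D, EvLB T r xi d) ∧ DConv T D x

/-- `U` is open in the topology determined by `S_X`. -/
def SOpen (T : Set (Set X)) (U : Set X) : Prop :=
  ∀ (I : Type) (r : I → I → Prop), DirIdx r → ∀ (xi : I → X) (x : X),
    SConv T r xi x → x ∈ U → EvIn r xi U

/-- `y ≪_d x`. -/
def WayBelow (T : Set (Set X)) (y x : X) : Prop :=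
  ∀ D : Set X, IsDirSet T D → DConv T D x → ∃ d ∈ D, sle T y d

/-- A continuous space (relative to the family `T`). -/
def IsContinuousT (T : Set (Set X)) : Prop :=
  DirT T ∧ ∀ x : X, IsDirSet T {y | WayBelow T y x} ∧ DConv T {y | WayBelow T y x} x

def IsContinuousSpace (X : Type) [TopologicalSpace X] : Prop := IsContinuousT (opens X)

/-- `G ≪_d H` for subsets. -/
def SWayBelow (T : Set (Set X)) (G H : Set X) : Prop :=
  ∀ (D : Set X) (x : X), IsDirSet T D → DConv T D x → x ∈ H → (D ∩ upset T G).Nonempty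

/-- A directed family of finite sets (ordered by reverse inclusion of upper closures). -/
def IsDirFam (T : Set (Set X)) (F : Set (Set X)) : Prop :=
  F.Nonempty ∧ (∀ A ∈ F, A.Finite) ∧
    ∀ A ∈ F, ∀ B ∈ F, ∃ C ∈ F, upset T C ⊆ upset T A ∧ upset T C ⊆ upset T B

/-- Convergence of a family of finite sets to `x`. -/
def FamConv (T : Set (Set X)) (F : Set (Set X)) (x : X) : Prop :=
  ∀ U ∈ T, x ∈ U → ∃ A ∈ F, upset T A ⊆ U

/-- `fin_d(x)`. -/
def finD (T : Set (Set X)) (x : X) : Set (Set X) := {A | A.Finite ∧ SWayBelow T A {x}}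

def IsQuasicontinuousT (T : Set (Set X)) : Prop :=
  DirT T ∧ ∀ x : X, IsDirFam T (finD T x) ∧ FamConv T (finD T x) x

def IsQuasicontinuousSpace (X : Type) [TopologicalSpace X] : Prop :=
  IsQuasicontinuousT (opens X)

/-- `A` is a quasi eventual lower bound of the net `xi`. -/
def QEvLB (T : Set (Set X)) {I : Type} (r : I → I → Prop) (xi : I → X) (A : Set X) : Prop :=
  A.Finite ∧ ∃ k, ∀ i, r k i → xi i ∈ upset T A

/-- `((x_i), x) ∈ S*_X`. -/
def QSConv (T : Set (Set X)) {I : Type} (r : I → I → Prop) (xi : I → X) (x : X) : Prop :=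
  ∃ F : Set (Set X), IsDirFam T F ∧ (∀ A ∈ F, QEvLB T r xi A) ∧ FamConv T F x

/-- `U` is open in the topology determined by `S*_X`. -/
def QSOpen (T : Set (Set X)) (U : Set X) : Prop :=
  ∀ (I : Type) (r : I → I → Prop), DirIdx r → ∀ (xi : I → X) (x : X),
    QSConv T r xi x → x ∈ U → EvIn r xi U

/-- `x ≡ liminf x_i`. -/
def IsLiminf (T : Set (Set X)) {I : Type} (r : I → I → Prop) (xi : I → X) (x : X) : Prop :=
  (∀ y, EvLB T r xi y → sle T y x) ∧
  (∀ z, (∀ y, EvLB T r xi y → sle T y z) → sle T x z) ∧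
  SConv T r xi x

/-- `f : (J,s) → (I,r)` is a subnet map: monotone and cofinal, with directed domain. -/
def Subnet {I J : Type} (r : I → I → Prop) (s : J → J → Prop) (f : J → I) : Prop :=
  DirIdx s ∧ (∀ a b, s a b → r (f a) (f b)) ∧ ∀ i, ∃ j, r i (f j)

/-- `z` is a cofinal lower bound of the net `xi`. -/
def CofLB (T : Set (Set X)) {I : Type} (r : I → I → Prop) (xi : I → X) (z : X) : Prop :=
  ∀ i, ∃ j, r i j ∧ sle T z (xi j)

/-- `((x_i), x) ∈ L_X`: every subnet has liminf `x`. -/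
def LConv (T : Set (Set X)) {I : Type} (r : I → I → Prop) (xi : I → X) (x : X) : Prop :=
  ∀ (J : Type) (s : J → J → Prop) (f : J → I), Subnet r s f →
    IsLiminf T s (fun j => xi (f j)) x

/-- `U` is open in the liminf topology `L(X)`. -/
def LOpen (T : Set (Set X)) (U : Set X) : Prop :=
  ∀ (I : Type) (r : I → I → Prop), DirIdx r → ∀ (xi : I → X) (x : X),
    LConv T r xi x → x ∈ U → EvIn r xi U

/-- `x ≡_q liminf x_i`. -/
def QLiminf (T : Set (Set X)) {I : Type} (r : I → I → Prop) (xi : I → X) (x : X) : Prop :=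
  QSConv T r xi x ∧ ∀ y, EvLB T r xi y → sle T y x

/-- `((x_i), x) ∈ L*_X`: every subnet quasi-liminf converges to `x`. -/
def QLConv (T : Set (Set X)) {I : Type} (r : I → I → Prop) (xi : I → X) (x : X) : Prop :=
  ∀ (J : Type) (s : J → J → Prop) (f : J → I), Subnet r s f →
    QLiminf T s (fun j => xi (f j)) x

/-- `U` is open in the quasi-liminf topology `L*(X)`. -/
def QLOpen (T : Set (Set X)) (U : Set X) : Prop :=
  ∀ (I : Type) (r : I → I → Prop), DirIdx r → ∀ (xi : I → X) (x : X),
    QLConv T r xi x → x ∈ U → EvIn r xi U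

/-- The Lawson topology: generated by the opens of `X` and complements of
principal upper sets. -/
def lawson (X : Type) [TopologicalSpace X] : Set (Set X) :=
  {U | (TopologicalSpace.generateFrom
      (opens X ∪ {V | ∃ y : X, V = {z : X | sle (opens X) y z}ᶜ})).IsOpen U}

section Aux

variable {T : Set (Set X)}

theorem sle_refl' (x : X) : sle T x x := fun _ _ h => h

theorem sle_trans' {x y z : X} (h1 : sle T x y) (h2 : sle T y z) : sle T x z :=
  fun U hU hx => h2 U hU (h1 U hU hx)

theorem singleton_dir (x : X) : IsDirSet T {x} := by
  refine ⟨⟨x, rfl⟩, fun a ha b hb => ⟨x, rfl, ?_, ?_⟩⟩ <;>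
    · rw [Set.mem_singleton_iff] at ha hb; subst ha; subst hb; exact sle_refl' _

theorem singleton_conv (x : X) : DConv T {x} x := fun _ _ hx => ⟨x, rfl, hx⟩

theorem wb_le {y x : X} (h : WayBelow T y x) : sle T y x := by
  obtain ⟨d, hd, hyd⟩ := h {x} (singleton_dir x) (singleton_conv x)
  rw [Set.mem_singleton_iff] at hd; subst hd; exact hyd

theorem wb_mono_left {d c e : X} (h1 : sle T d c) (h2 : WayBelow T c e) :
    WayBelow T d e := fun D hD hconv => by
  obtain ⟨d', hd', hcd'⟩ := h2 D hD hconv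
  exact ⟨d', hd', sle_trans' h1 hcd'⟩

theorem wb_mono_right {d e z : X} (h1 : WayBelow T d e) (h2 : sle T e z) :
    WayBelow T d z :=
  fun D hD hconv => h1 D hD (fun U hU heU => hconv U hU (h2 U hU heU))

theorem interp (hc : IsContinuousT T) {d x : X} (h : WayBelow T d x) :
    ∃ e, WayBelow T d e ∧ WayBelow T e x := by
  set D : Set X := {c | ∃ e, WayBelow T c e ∧ WayBelow T e x} with hDdef
  have hdir : IsDirSet T D := by
    constructor
    · obtain ⟨e, he⟩ := (hc.2 x).1.1
      obtain ⟨c, hce⟩ := (hc.2 e).1.1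
      exact ⟨c, e, hce, he⟩
    · intro c1 hc1 c2 hc2
      obtain ⟨e1, hc1e1, he1x⟩ := hc1
      obtain ⟨e2, hc2e2, he2x⟩ := hc2
      obtain ⟨e3, he3x, h13, h23⟩ := (hc.2 x).1.2 e1 he1x e2 he2x
      have hc1e3 : WayBelow T c1 e3 := wb_mono_right hc1e1 h13
      have hc2e3 : WayBelow T c2 e3 := wb_mono_right hc2e2 h23
      obtain ⟨c1', hc1'e3, h11⟩ := hc1e3 _ (hc.2 e3).1 (hc.2 e3).2
      obtain ⟨c2', hc2'e3, h22⟩ := hc2e3 _ (hc.2 e3).1 (hc.2 e3).2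
      obtain ⟨c, hce3, hc1'c, hc2'c⟩ := (hc.2 e3).1.2 c1' hc1'e3 c2' hc2'e3
      exact ⟨c, ⟨e3, hce3, he3x⟩, sle_trans' h11 hc1'c, sle_trans' h22 hc2'c⟩
  have hconv : DConv T D x := by
    intro U hU hxU
    obtain ⟨e, heD, heU⟩ := (hc.2 x).2 U hU hxU
    obtain ⟨c, hcD, hcU⟩ := (hc.2 e).2 U hU heU
    exact ⟨c, ⟨e, hcD, heD⟩, hcU⟩
  obtain ⟨c, ⟨e, hce, hex⟩, hdc⟩ := h D hdir hconv
  exact ⟨e, wb_mono_left hdc hce, hex⟩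

theorem up_open (hc : IsContinuousT T) (d : X) : {z | WayBelow T d z} ∈ T := by
  apply hc.1
  intro D z hD hconv hz
  obtain ⟨e, hde, hez⟩ := interp hc hz
  obtain ⟨d', hd'D, hed'⟩ := hez D hD hconv
  exact ⟨d', hd'D, wb_mono_right hde hed'⟩

theorem opens_subset_lawson [TopologicalSpace X] {U : Set X} (hU : U ∈ opens X) :
    U ∈ lawson X :=
  TopologicalSpace.GenerateOpen.basic U (Or.inl hU)

theorem compl_up_lawson [TopologicalSpace X] (y : X) :
    {z : X | sle (opens X) y z}ᶜ ∈ lawson X :=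
  TopologicalSpace.GenerateOpen.basic _ (Or.inr ⟨y, rfl⟩)

theorem evlb_of_lawson [TopologicalSpace X] (h : IsContinuousSpace X)
    {I : Type} {r : I → I → Prop} {xi : I → X} {x : X}
    (hN : NConv (lawson X) r xi x) {d : X} (hd : WayBelow (opens X) d x) :
    EvLB (opens X) r xi d := by
  obtain ⟨k, hk⟩ := hN _ (opens_subset_lawson (up_open h d)) hd
  exact ⟨k, fun i hi => wb_le (hk i hi)⟩

theorem liminf_of_lawson [TopologicalSpace X] (h : IsContinuousSpace X)
    {I : Type} {r : I → I → Prop} (hr : DirIdx r) {xi : I → X} {x : X}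
    (hN : NConv (lawson X) r xi x) : IsLiminf (opens X) r xi x := by
  refine ⟨?_, ?_, ?_⟩
  · rintro y ⟨k, hk⟩
    by_contra hyx
    obtain ⟨k', hk'⟩ := hN _ (compl_up_lawson y) hyx
    obtain ⟨c, hkc, hk'c⟩ := hr.2.2.2 k k'
    exact hk' c hk'c (hk c hkc)
  · intro z hz U hU hxU
    obtain ⟨d, hdx, hdU⟩ := (h.2 x).2 U hU hxU
    exact hz d (evlb_of_lawson h hN hdx) U hU hdU
  · exact ⟨_, (h.2 x).1, fun d hd => evlb_of_lawson h hN hd, (h.2 x).2⟩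

theorem nconv_subnet {T' : Set (Set X)} {I J : Type} {r : I → I → Prop}
    {s : J → J → Prop} {f : J → I} (hr : DirIdx r) (hf : Subnet r s f)
    {xi : I → X} {x : X} (hN : NConv T' r xi x) :
    NConv T' s (fun j => xi (f j)) x := by
  intro U hU hx
  obtain ⟨k, hk⟩ := hN U hU hx
  obtain ⟨j0, hj0⟩ := hf.2.2 k
  exact ⟨j0, fun j hj => hk (f j) (hr.2.2.1 _ _ _ hj0 (hf.2.1 j0 j hj))⟩

end Aux

theorem stmt17 (X : Type) [TopologicalSpace X] [T0Space X]
    (h : IsContinuousSpace X) :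
    ∀ (I : Type) (r : I → I → Prop), DirIdx r → ∀ (xi : I → X) (x : X),
      NConv (lawson X) r xi x ↔ LConv (opens X) r xi x := by
  intro I r hr xi x
  constructor
  · intro hN J s f hf
    exact liminf_of_lawson h hf.1 (nconv_subnet hr hf hN)
  · intro hL U hU
    replace hU : TopologicalSpace.GenerateOpen
        (opens X ∪ {V | ∃ y : X, V = {z : X | sle (opens X) y z}ᶜ}) U := hU
    induction hU with
    | basic V hV =>
      rcases hV with hV | ⟨y, rfl⟩
      · intro hxU
        have hlim : IsLiminf (opens X) r xi x :=
          hL I r id ⟨hr, fun a b hab => hab, fun i => ⟨i, hr.2.1 i⟩⟩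
        obtain ⟨D, hD, hevlb, hconv⟩ := hlim.2.2
        obtain ⟨d, hdD, hdV⟩ := hconv V hV hxU
        obtain ⟨k, hk⟩ := hevlb d hdD
        exact ⟨k, fun i hi => hk i hi V hV hdV⟩
      · intro hxU
        by_contra hcon
        have hcof : ∀ k, ∃ i, r k i ∧ sle (opens X) y (xi i) := by
          intro k
          by_contra hno
          push_neg at hno
          exact hcon ⟨k, fun i hi => hno i hi⟩
        set J := {i : I // sle (opens X) y (xi i)} with hJ
        set s : J → J → Prop := fun a b => r a.1 b.1 with hs
        have hsub : Subnet r s Subtype.val := by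
          refine ⟨⟨?_, fun a => hr.2.1 a.1,
            fun a b c hab hbc => hr.2.2.1 _ _ _ hab hbc, ?_⟩,
            fun a b hab => hab, fun i => ?_⟩
          · obtain ⟨i0⟩ := hr.1
            obtain ⟨i, _, hi2⟩ := hcof i0
            exact ⟨⟨i, hi2⟩⟩
          · intro a b
            obtain ⟨c, hac, hbc⟩ := hr.2.2.2 a.1 b.1
            obtain ⟨i, hci, hi2⟩ := hcof c
            exact ⟨⟨i, hi2⟩, hr.2.2.1 _ _ _ hac hci, hr.2.2.1 _ _ _ hbc hci⟩
          · obtain ⟨j, hij, hj2⟩ := hcof i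
            exact ⟨⟨j, hj2⟩, hij⟩
        have hlim := hL J s Subtype.val hsub
        obtain ⟨j0⟩ : Nonempty J := hsub.1.1
        exact hxU (hlim.1 y ⟨j0, fun j _ => j.2⟩)
    | univ =>
      intro _
      obtain ⟨i0⟩ := hr.1
      exact ⟨i0, fun _ _ => trivial⟩
    | inter U V hUo hVo ihU ihV =>
      intro hxU
      obtain ⟨k1, hk1⟩ := ihU hxU.1
      obtain ⟨k2, hk2⟩ := ihV hxU.2
      obtain ⟨k, h1, h2⟩ := hr.2.2.2 k1 k2
      exact ⟨k, fun i hi =>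
        ⟨hk1 i (hr.2.2.1 _ _ _ h1 hi), hk2 i (hr.2.2.1 _ _ _ h2 hi)⟩⟩
    | sUnion S hS ih =>
      intro hxU
      obtain ⟨t, htS, hxt⟩ := hxU
      obtain ⟨k, hk⟩ := ih t htS hxt
      exact ⟨k, fun i hi => ⟨t, htS, hk i hi⟩⟩

end Conv
end

section
/- Let X be a directed space. Then the Lawson topology λ(X) is coarser than the quasi-liminf topology L*(X), the topology determined by the convergence class L*_X. -/
namespace Conv

variable {X : Type}

private lemma qlopen_basic {X : Type} (T : Set (Set X)) (U : Set X) (hU : U ∈ T) :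
    QLOpen T U := by
  rintro I r _hr xi x hql hx
  obtain ⟨⟨F, _hF, hqe, hfc⟩, _⟩ :=
    hql I r id ⟨_hr, fun a b h => h, fun i => ⟨i, _hr.2.1 i⟩⟩
  obtain ⟨A, hA, hAU⟩ := hfc U hU hx
  obtain ⟨_, k, hk⟩ := hqe A hA
  exact ⟨k, fun i hi => hAU (hk i hi)⟩

private lemma qlopen_compl_up {X : Type} (T : Set (Set X)) (y : X) :
    QLOpen T {z : X | sle T y z}ᶜ := by
  rintro I r hr xi x hql hx
  by_contra hev
  simp only [EvIn, not_exists, not_forall] at hev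
  have hcof : ∀ k, ∃ i, r k i ∧ sle T y (xi i) := by
    intro k
    obtain ⟨i, hki, hi⟩ := hev k
    exact ⟨i, hki, not_not.mp hi⟩
  -- build subnet on indices where y is a lower bound
  set J := {i : I // sle T y (xi i)} with hJ
  obtain ⟨i0⟩ := hr.1
  obtain ⟨i1, _, hi1⟩ := hcof i0
  have hJdir : DirIdx (fun a b : J => r a.1 b.1) := by
    refine ⟨⟨⟨i1, hi1⟩⟩, fun a => hr.2.1 a.1, fun a b c hab hbc => hr.2.2.1 _ _ _ hab hbc, ?_⟩
    intro a b
    obtain ⟨c, hac, hbc⟩ := hr.2.2.2 a.1 b.1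
    obtain ⟨j, hcj, hj⟩ := hcof c
    exact ⟨⟨j, hj⟩, hr.2.2.1 _ _ _ hac hcj, hr.2.2.1 _ _ _ hbc hcj⟩
  have hsub : Subnet r (fun a b : J => r a.1 b.1) (fun a : J => a.1) :=
    ⟨hJdir, fun a b h => h, fun i => by
      obtain ⟨j, hij, hj⟩ := hcof i
      exact ⟨⟨j, hj⟩, hij⟩⟩
  obtain ⟨_, hlb⟩ := hql J _ _ hsub
  exact hx (hlb y ⟨⟨i1, hi1⟩, fun j _ => j.2⟩)

theorem stmt18 (X : Type) [TopologicalSpace X] [T0Space X]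
    (hd : IsDirectedSpace X) :
    ∀ U ∈ lawson X, QLOpen (opens X) U := by
  intro U hU
  induction hU with
  | basic V hV =>
    rcases hV with hV | ⟨y, rfl⟩
    · exact qlopen_basic _ V hV
    · exact qlopen_compl_up _ y
  | univ =>
    rintro I r hr xi x _ _
    obtain ⟨i0⟩ := hr.1
    exact ⟨i0, fun i _ => trivial⟩
  | inter V W _ _ ihV ihW =>
    rintro I r hr xi x hql ⟨hxV, hxW⟩
    obtain ⟨k1, hk1⟩ := ihV I r hr xi x hql hxV
    obtain ⟨k2, hk2⟩ := ihW I r hr xi x hql hxW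
    obtain ⟨k, hk1', hk2'⟩ := hr.2.2.2 k1 k2
    exact ⟨k, fun i hi => ⟨hk1 i (hr.2.2.1 _ _ _ hk1' hi), hk2 i (hr.2.2.1 _ _ _ hk2' hi)⟩⟩
  | sUnion S _ ih =>
    rintro I r hr xi x hql ⟨V, hVS, hxV⟩
    obtain ⟨k, hk⟩ := ih V hVS I r hr xi x hql hxV
    exact ⟨k, fun i hi => ⟨V, hVS, hk i hi⟩⟩


end Conv
end
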